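/- arXiv:1102.2275 — 3 statements merged into one kernel-verified Lean document; each statement's English description precedes it below -/
import Mathlib

section
/- For every indecomposable countable ordinal β, the principle TWCG_β holds if and only if the principle TWCG^{ℵ₀}_β holds. -/
open Ordinal Set

/-- The first uncountable ordinal, `ω₁`. -/
noncomputable def omega1 : Ordinal := (Cardinal.aleph 1).ord

/-- The order type of a set of ordinals: the unique ordinal `o` (when it
exists) such that `A` is order-isomorphic to `Set.Iio o`. -/
noncomputable def otype (A : Set Ordinal) : Ordinal :=
  sInf {o : Ordinal | Nonempty (Set.Iio o ≃o A)}

/-- `A` is closed in `δ`: the supremum of every nonempty subset of `A`,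
whenever it is less than `δ`, belongs to `A`. -/
def IsClosedIn (A : Set Ordinal) (δ : Ordinal) : Prop :=
  ∀ s ⊆ A, s.Nonempty → sSup s < δ → sSup s ∈ A

/-- `A` is club in `δ`: a subset of `δ`, unbounded in `δ` and closed in `δ`. -/
def IsClubIn (A : Set Ordinal) (δ : Ordinal) : Prop :=
  A ⊆ Set.Iio δ ∧ sSup A = δ ∧ IsClosedIn A δ

/-- `β` is (additively) indecomposable: `β > 0` and `γ + β = β` for all `γ < β`. -/
def Indecomposable (β : Ordinal) : Prop := 0 < β ∧ ∀ γ < β, γ + β = β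

/-- A `β`-ladder system: for every nonzero `δ < ω₁` divisible by `β`,
`A δ` is club in `δ` with order type `β`. -/
def IsLadderSystem (β : Ordinal) (A : Ordinal → Set Ordinal) : Prop :=
  ∀ δ, δ < omega1 → δ ≠ 0 → β ∣ δ → IsClubIn (A δ) δ ∧ otype (A δ) = β

/-- Thinness of a ladder system: for every `γ < ω₁`, the family
`{A δ ∩ γ : δ < ω₁}` is countable. -/
def IsThinLadder (A : Ordinal → Set Ordinal) : Prop :=
  ∀ γ < omega1, {s : Set Ordinal | ∃ δ < omega1, s = A δ ∩ Set.Iio γ}.Countable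

/-- The `β`-Thin Weak Club Guessing principle `TWCG_β`. -/
def TWCG (β : Ordinal) : Prop :=
  ∃ A : Ordinal → Set Ordinal, IsLadderSystem β A ∧ IsThinLadder A ∧
    ∀ D : Set Ordinal, IsClubIn D omega1 →
      ∃ δ ∈ D, δ ≠ 0 ∧ β ∣ δ ∧ otype (A δ ∩ D) = β

/-- A `(β, ℵ₀)`-system: for every `n < ω` and every nonzero `δ < ω₁`
divisible by `β`, `A n δ` is club in `δ` with order type `β`. -/
def IsSystem (β : Ordinal) (A : ℕ → Ordinal → Set Ordinal) : Prop :=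
  ∀ (n : ℕ) (δ : Ordinal), δ < omega1 → δ ≠ 0 → β ∣ δ →
    IsClubIn (A n δ) δ ∧ otype (A n δ) = β

/-- Thinness of a `(β, ℵ₀)`-system: for every `γ < ω₁`, the family
`{A n δ ∩ γ : n < ω, δ < ω₁}` is countable. -/
def IsThinSystem (A : ℕ → Ordinal → Set Ordinal) : Prop :=
  ∀ γ < omega1,
    {s : Set Ordinal | ∃ (n : ℕ), ∃ δ < omega1, s = A n δ ∩ Set.Iio γ}.Countable

/-- The principle `TWCG^{ℵ₀}_β`. -/
def TWCGomega (β : Ordinal) : Prop :=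
  ∃ A : ℕ → Ordinal → Set Ordinal, IsSystem β A ∧ IsThinSystem A ∧
    ∀ D : Set Ordinal, IsClubIn D omega1 →
      ∃ δ ∈ D, δ ≠ 0 ∧ β ∣ δ ∧ ∃ n : ℕ, otype (A n δ ∩ D) = β

/-! A single ladder system is a system with constant rows. Conversely, suppose a thin
`(β, ℵ₀)`-system guesses clubs but none of its rows `A n` does, and let `D n` be a club missed
by `A n`. As `cf ω₁ > ω`, the intersection `D = ⋂ n, D n` is again a club, so the system guesses
it at some `δ` with some row `n`. Order types are monotone on bounded sets of ordinals, hence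
`β = otype (A n δ ∩ D) ≤ otype (A n δ ∩ D n) ≤ otype (A n δ) = β`, contradicting the choice of
`D n`. -/

universe u

section OrderType

variable {X Y : Set Ordinal.{u}} {o : Ordinal.{u}}

theorem lift_eq_typeLT_of_orderIso_Iio (e : Iio o ≃o X) : lift.{u + 1} o = typeLT X := by
  rw [← type_lt_Iio]
  exact e.ordinalType_congr

theorem otype_eq_of_orderIso (e : Iio o ≃o X) : otype X = o := by
  have hrep : {o' : Ordinal.{u} | Nonempty (Iio o' ≃o X)} = {o} := by
    ext o'
    refine ⟨fun ⟨e'⟩ => ?_, fun h => h ▸ ⟨e⟩⟩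
    exact lift_inj.1
      ((lift_eq_typeLT_of_orderIso_Iio e').trans (lift_eq_typeLT_of_orderIso_Iio e).symm)
  rw [otype, hrep, csInf_singleton]

theorem exists_orderIso_Iio_of_bddAbove (hX : BddAbove X) :
    ∃ o : Ordinal.{u}, Nonempty (Iio o ≃o X) := by
  obtain ⟨b, hb⟩ := hX
  have hle : typeLT X ≤ lift.{u + 1} (Order.succ b) := by
    rw [← type_lt_Iio]
    exact type_mono fun x hx => Order.lt_succ_iff.2 (hb hx)
  obtain ⟨o, ho⟩ := mem_range_lift_of_le hle
  rw [← type_lt_Iio] at ho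
  obtain ⟨e⟩ := type_eq.1 ho
  exact ⟨o, ⟨OrderIso.ofRelIsoLT e⟩⟩

-- `otype X` may take values in any universe (junk `0` where the type is too large); we use
-- the universe of `X`, where bounded sets always have their order type.
theorem lift_otype_of_bddAbove (hX : BddAbove X) :
    lift.{u + 1} (otype X : Ordinal.{u}) = typeLT X := by
  obtain ⟨o, ⟨e⟩⟩ := exists_orderIso_Iio_of_bddAbove hX
  rw [otype_eq_of_orderIso e]
  exact lift_eq_typeLT_of_orderIso_Iio e

theorem otype_mono (hXY : X ⊆ Y) (hY : BddAbove Y) : (otype X : Ordinal.{u}) ≤ otype Y := by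
  have hle := type_mono hXY
  rw [← lift_otype_of_bddAbove (hY.mono hXY), ← lift_otype_of_bddAbove hY] at hle
  exact lift_le.1 hle

end OrderType

section Club

variable {D : Set Ordinal.{u}} {o : Ordinal.{u}}

theorem isClosedIn_iff_dirSupClosed_preimage (hD : D ⊆ Iio o) :
    IsClosedIn D o ↔ DirSupClosed (Subtype.val ⁻¹' D : Set (Iio o)) := by
  constructor
  · intro hcl d hd hne _ a ha
    have hbdd : BddAbove (Subtype.val '' d) := ⟨a, by rintro _ ⟨x, hx, rfl⟩; exact ha.1 hx⟩
    have hle : sSup (Subtype.val '' d) ≤ a :=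
      csSup_le' (by rintro _ ⟨x, hx, rfl⟩; exact ha.1 hx)
    have hge : a ≤ (⟨sSup (Subtype.val '' d), hle.trans_lt a.2⟩ : Iio o) :=
      ha.2 fun x hx => le_csSup hbdd ⟨x, hx, rfl⟩
    have hmem := hcl _ (by rintro _ ⟨x, hx, rfl⟩; exact hd hx) (hne.image _) (hle.trans_lt a.2)
    rwa [le_antisymm hle hge] at hmem
  · intro hcl s hs hne hlt
    have hbdd : BddAbove s := ⟨o, fun x hx => (hD (hs hx)).le⟩
    refine hcl (d := (Subtype.val ⁻¹' s : Set (Iio o))) (a := ⟨sSup s, hlt⟩) (fun x hx => hs hx)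
      ?_ (.of_linearOrder _) ⟨fun x hx => le_csSup hbdd hx, fun b hb => ?_⟩
    · obtain ⟨x, hx⟩ := hne
      exact ⟨⟨x, hD (hs hx)⟩, hx⟩
    · exact csSup_le hne fun x hx => hb (a := ⟨x, hD (hs hx)⟩) hx

theorem sSup_eq_iff_isCofinal_preimage (hD : D ⊆ Iio o) (ho : Order.IsSuccPrelimit o) :
    sSup D = o ↔ IsCofinal (Subtype.val ⁻¹' D : Set (Iio o)) := by
  constructor
  · rintro hsup ⟨x, hx⟩
    obtain ⟨y, hy, hxy⟩ := exists_lt_of_lt_csSup' (hsup ▸ hx : x < sSup D)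
    exact ⟨⟨y, hD hy⟩, hy, hxy.le⟩
  · intro hcof
    refine le_antisymm (csSup_le' fun x hx => (hD hx).le) (le_of_forall_lt fun c hc => ?_)
    obtain ⟨⟨y, _⟩, hy, hcy⟩ := hcof ⟨Order.succ c, ho.succ_lt hc⟩
    exact (Order.lt_succ c).trans_le
      ((Subtype.mk_le_mk.1 hcy).trans (le_csSup ⟨o, fun x hx => (hD hx).le⟩ hy))

theorem isClubIn_iff_isClub_preimage (hD : D ⊆ Iio o) (ho : Order.IsSuccPrelimit o) :
    IsClubIn D o ↔ IsClub (Subtype.val ⁻¹' D : Set (Iio o)) := by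
  rw [isClub_iff, IsClubIn, ← isClosedIn_iff_dirSupClosed_preimage hD,
    ← sSup_eq_iff_isCofinal_preimage hD ho]
  exact ⟨fun h => ⟨h.2.2, h.2.1⟩, fun h => ⟨hD, h.2, h.1⟩⟩

theorem IsClubIn.isSuccPrelimit (hD : IsClubIn D o) : Order.IsSuccPrelimit o := by
  refine Order.isSuccPrelimit_of_succ_lt fun c hc =>
    (Order.succ_le_of_lt hc).lt_of_ne fun hco => ?_
  have hsup : sSup D ≤ c := csSup_le' fun x hx => Order.lt_succ_iff.1 (hco ▸ hD.1 hx)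
  exact (hsup.trans_lt hc).ne hD.2.1

theorem IsClubIn.iInter_of_countable {ι : Type*} [Countable ι] [Nonempty ι]
    {D : ι → Set Ordinal.{u}} (ho : o.cof ≠ Cardinal.aleph0) (hD : ∀ i, IsClubIn (D i) o) :
    IsClubIn (⋂ i, D i) o := by
  obtain ⟨i⟩ := ‹Nonempty ι›
  have hlim := (hD i).isSuccPrelimit
  have hsub : (⋂ i, D i) ⊆ Iio o := (iInter_subset D i).trans (hD i).1
  rw [isClubIn_iff_isClub_preimage hsub hlim, preimage_iInter]
  refine IsClub.iInter_of_countable ?_ fun i =>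
    (isClubIn_iff_isClub_preimage (hD i).1 hlim).1 (hD i)
  rwa [cof_Iio, ← lift_cof, Ne, Cardinal.lift_eq_aleph0]

theorem cof_omega1_ne_aleph0 : omega1.{u}.cof ≠ Cardinal.aleph0 := by
  rw [omega1, Cardinal.isRegular_aleph_one.cof_ord]
  exact Cardinal.aleph0_lt_aleph_one.ne'

end Club

def GuessesClubs (β : Ordinal.{u}) (A : Ordinal.{u} → Set Ordinal.{u}) : Prop :=
  ∀ D : Set Ordinal, IsClubIn D omega1 → ∃ δ ∈ D, δ ≠ 0 ∧ β ∣ δ ∧ otype (A δ ∩ D) = β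

section Guessing

variable {β : Ordinal.{u}}

theorem IsLadderSystem.isSystem_const {A : Ordinal → Set Ordinal} (hA : IsLadderSystem β A) :
    IsSystem β fun _ => A :=
  fun _ => hA

theorem IsThinLadder.isThinSystem_const {A : Ordinal → Set Ordinal} (hA : IsThinLadder A) :
    IsThinSystem fun _ => A :=
  fun γ hγ => (hA γ hγ).mono <| by
    rintro _ ⟨_, δ, hδ, rfl⟩
    exact ⟨δ, hδ, rfl⟩

theorem IsSystem.isLadderSystem {A : ℕ → Ordinal → Set Ordinal} (hA : IsSystem β A) (n : ℕ) :
    IsLadderSystem β (A n) :=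
  hA n

theorem IsThinSystem.isThinLadder {A : ℕ → Ordinal → Set Ordinal} (hA : IsThinSystem A)
    (n : ℕ) : IsThinLadder (A n) :=
  fun γ hγ => (hA γ hγ).mono <| by
    rintro _ ⟨δ, hδ, rfl⟩
    exact ⟨n, δ, hδ, rfl⟩

theorem IsSystem.exists_guessesClubs {A : ℕ → Ordinal → Set Ordinal} (hA : IsSystem β A)
    (hguess : ∀ D : Set Ordinal, IsClubIn D omega1 →
      ∃ δ ∈ D, δ ≠ 0 ∧ β ∣ δ ∧ ∃ n : ℕ, otype (A n δ ∩ D) = β) :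
    ∃ n, GuessesClubs β (A n) := by
  by_contra! hmiss
  simp only [GuessesClubs, not_forall, not_exists, not_and] at hmiss
  choose D hD hbad using hmiss
  have hclub := IsClubIn.iInter_of_countable cof_omega1_ne_aleph0 hD
  obtain ⟨δ, hδ, hδ0, hβδ, n, hot⟩ := hguess _ hclub
  have hAδ := hA n δ (hclub.1 hδ) hδ0 hβδ
  have hbdd : BddAbove (A n δ) := ⟨δ, fun x hx => (hAδ.1.1 hx).le⟩
  refine hbad n δ (mem_iInter.1 hδ n) hδ0 hβδ (le_antisymm ?_ ?_)
  · exact hAδ.2 ▸ otype_mono inter_subset_left hbdd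
  · exact hot ▸ otype_mono (inter_subset_inter_right _ (iInter_subset D n))
      (hbdd.mono inter_subset_left)

end Guessing

theorem twcg_iff_twcg_omega_general (β : Ordinal) : TWCG β ↔ TWCGomega β := by
  constructor
  · rintro ⟨A, hA, hthin, hguess⟩
    refine ⟨fun _ => A, hA.isSystem_const, hthin.isThinSystem_const, fun D hD => ?_⟩
    obtain ⟨δ, hδ, hδ0, hβδ, hot⟩ := hguess D hD
    exact ⟨δ, hδ, hδ0, hβδ, 0, hot⟩
  · rintro ⟨A, hA, hthin, hguess⟩
    obtain ⟨n, hn⟩ := hA.exists_guessesClubs hguess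
    exact ⟨A n, hA.isLadderSystem n, hthin.isThinLadder n, hn⟩

/-- For every indecomposable countable ordinal `β`,
`TWCG_β` holds iff `TWCG^{ℵ₀}_β` holds. -/
theorem twcg_iff_twcg_omega (β : Ordinal) (hβ : Indecomposable β)
    (hβω : β < omega1) : TWCG β ↔ TWCGomega β :=
  twcg_iff_twcg_omega_general β
end

section
/- For every indecomposable countable ordinal β, the principle WCG_β holds if and only if the principle WCG^{ℵ₀}_β holds. -/
open Ordinal Set

/-- The `β`-Weak Club Guessing principle `WCG_β`. -/
def WCG (β : Ordinal) : Prop :=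
  ∃ A : Ordinal → Set Ordinal, IsLadderSystem β A ∧
    ∀ D : Set Ordinal, IsClubIn D omega1 →
      ∃ δ ∈ D, δ ≠ 0 ∧ β ∣ δ ∧ otype (A δ ∩ D) = β

/-- The principle `WCG^{ℵ₀}_β`. -/
def WCGomega (β : Ordinal) : Prop :=
  ∃ A : ℕ → Ordinal → Set Ordinal, IsSystem β A ∧
    ∀ D : Set Ordinal, IsClubIn D omega1 →
      ∃ δ ∈ D, δ ≠ 0 ∧ β ∣ δ ∧ ∃ n : ℕ, otype (A n δ ∩ D) = β

/-!
`WCG_β` gives `WCG^{ℵ₀}_β` by using the same ladder for every `n`. Conversely, given a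
`(β, ℵ₀)`-system, fix for each `δ` a monotone sequence `g` cofinal in `δ` and let
`B_δ = ⋃ n, A^n_δ ∩ [g n, δ)`. A proper initial segment of `δ` meets only finitely many of the
pieces, so `B_δ` is club in `δ`, and each proper initial segment of `B_δ` is a finite union of
sets of order type `< β`. The order type of `X ∪ Y` is at most the Hessenberg natural sum
`otype X ♯ otype Y`, and an additively indecomposable `β = ω ^ τ` is closed under `♯`; hence
`B_δ` has order type `β`. For the same reason a tail of a subset of `A^n_δ` of order type `β`
still has order type `β`, and `B_δ` contains a tail of every `A^n_δ`, so `B_δ` guesses every club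
that some `A^n_δ` guesses.
-/

universe u

noncomputable def nadd (a b : Ordinal.{u}) : Ordinal.{u} :=
  max (⨆ x : Iio a, Order.succ (nadd x.1 b)) (⨆ y : Iio b, Order.succ (nadd a y.1))
termination_by (a, b)
decreasing_by
  · exact Prod.Lex.left _ _ x.2
  · exact Prod.Lex.right _ y.2

infixl:65 " ♯ " => nadd

theorem nadd_le_iff {a b c : Ordinal.{u}} :
    a ♯ b ≤ c ↔ (∀ a' < a, a' ♯ b < c) ∧ ∀ b' < b, a ♯ b' < c := by
  rw [nadd, max_le_iff, Ordinal.iSup_le_iff, Ordinal.iSup_le_iff]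
  simp only [Order.succ_le_iff, Subtype.forall, mem_Iio]

theorem nadd_lt_nadd_right {a a' : Ordinal.{u}} (h : a' < a) (b : Ordinal.{u}) :
    a' ♯ b < a ♯ b :=
  (nadd_le_iff.1 le_rfl).1 a' h

theorem nadd_lt_nadd_left {b b' : Ordinal.{u}} (h : b' < b) (a : Ordinal.{u}) :
    a ♯ b' < a ♯ b :=
  (nadd_le_iff.1 le_rfl).2 b' h

theorem nadd_comm (a b : Ordinal.{u}) : a ♯ b = b ♯ a := by
  suffices ∀ a b : Ordinal.{u}, a ♯ b ≤ b ♯ a from (this a b).antisymm (this b a)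
  intro a b
  induction a using WellFoundedLT.induction generalizing b with | _ a iha =>
  induction b using WellFoundedLT.induction with | _ b ihb =>
  exact nadd_le_iff.2 ⟨fun a' ha' => (iha a' ha' b).trans_lt (nadd_lt_nadd_left ha' b),
    fun b' hb' => (ihb b' hb').trans_lt (nadd_lt_nadd_right hb' a)⟩

theorem nadd_lt_nadd_of_lt_of_le {a b c d : Ordinal.{u}} (hab : a < b) (hcd : c ≤ d) :
    a ♯ c < b ♯ d :=
  (nadd_lt_nadd_right hab c).trans_le <| hcd.eq_or_lt.elim (fun h => h ▸ le_rfl)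
    fun h => (nadd_lt_nadd_left h b).le

theorem nadd_lt_nadd_of_le_of_lt {a b c d : Ordinal.{u}} (hab : a ≤ b) (hcd : c < d) :
    a ♯ c < b ♯ d := by
  rw [nadd_comm a, nadd_comm b]
  exact nadd_lt_nadd_of_lt_of_le hcd hab

section NaddPrincipal

variable {W : Ordinal.{u}}

theorem exists_eq_mul_natCast_add {a c : Ordinal.{u}} (ha : a < W * c) (hc : c ≤ ω) :
    ∃ (j : ℕ) (r : Ordinal.{u}), a = W * j + r ∧ r < W ∧ (j : Ordinal) < c := by
  have hW : W ≠ 0 := by rintro rfl; simp at ha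
  have hdiv : a / W < c := (lt_mul_iff_div_lt hW).1 ha
  obtain ⟨j, hj⟩ := lt_omega0.1 (hdiv.trans_le hc)
  exact ⟨j, a % W, by rw [← hj, div_add_mod], mod_lt a hW, hj ▸ hdiv⟩

theorem mul_natCast_add_lt_mul_succ {x : Ordinal.{u}} (n : ℕ) (hx : x < W) :
    W * n + x < W * (n + 1 : ℕ) := by
  rw [Nat.cast_succ, mul_add_one]
  exact add_lt_add_right hx _

theorem exists_eq_mul_natCast_add_of_lt_mul_add {x r : Ordinal.{u}} {j : ℕ} (hr : r < W)
    (hx : x < W * j + r) :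
    ∃ (j' : ℕ) (r' : Ordinal.{u}), x = W * j' + r' ∧ r' < W ∧ (j' < j ∨ j' = j ∧ r' < r) := by
  rcases lt_or_ge x (W * j) with hxj | hxj
  · obtain ⟨j', r', rfl, hr', hj'⟩ := exists_eq_mul_natCast_add hxj (natCast_lt_omega0 j).le
    exact ⟨j', r', rfl, hr', Or.inl (mod_cast hj')⟩
  · obtain ⟨r', rfl⟩ := exists_add_of_le hxj
    have hr'r : r' < r := (add_lt_add_iff_left _).1 hx
    exact ⟨j, r', rfl, hr'r.trans hr, Or.inr ⟨rfl, hr'r⟩⟩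

theorem nadd_lt_of_lt_mul_add (hW : IsPrincipal nadd W) {j p : ℕ} {r s x : Ordinal.{u}}
    (hr : r < W) (hs : s < W) (hx : x < W * j + r)
    (ih : ∀ (j' : ℕ) (r' : Ordinal.{u}), r' < W → W * j' + r' < W * j + r →
      (W * j' + r') ♯ (W * p + s) ≤ W * (j' + p : ℕ) + (r' ♯ s)) :
    x ♯ (W * p + s) < W * (j + p : ℕ) + (r ♯ s) := by
  obtain ⟨j', r', rfl, hr', hj'⟩ := exists_eq_mul_natCast_add_of_lt_mul_add hr hx
  refine (ih j' r' hr' hx).trans_lt ?_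
  rcases hj' with hj' | ⟨rfl, hr'r⟩
  · calc W * (j' + p : ℕ) + (r' ♯ s) < W * (j' + p + 1 : ℕ) :=
          mul_natCast_add_lt_mul_succ _ (hW hr' hs)
      _ ≤ W * (j + p : ℕ) := mul_le_mul_right (by exact_mod_cast (by omega)) _
      _ ≤ _ := le_self_add
  · exact add_lt_add_right (nadd_lt_nadd_right hr'r s) _

theorem mul_add_nadd_mul_add_le (hW : IsPrincipal nadd W) {j p : ℕ} {r s : Ordinal.{u}}
    (hr : r < W) (hs : s < W) :
    (W * j + r) ♯ (W * p + s) ≤ W * (j + p : ℕ) + (r ♯ s) := by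
  induction h : (W * j + r) ♯ (W * p + s) using WellFoundedLT.induction
    generalizing j p r s with | _ γ ih =>
  subst h
  refine nadd_le_iff.2 ⟨fun x hx => nadd_lt_of_lt_mul_add hW hr hs hx
    fun j' r' hr' hlt => ih _ (nadd_lt_nadd_right hlt _) hr' hs rfl, fun y hy => ?_⟩
  rw [nadd_comm, nadd_comm r, add_comm j]
  exact nadd_lt_of_lt_mul_add hW hs hr hy fun p' s' hs' hlt => by
    rw [nadd_comm, nadd_comm s', add_comm p']
    exact ih _ (nadd_lt_nadd_left hlt _) hr hs' rfl

end NaddPrincipal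

theorem isPrincipal_nadd_omega0_opow (τ : Ordinal.{u}) : IsPrincipal nadd (ω ^ τ) := by
  induction τ using WellFoundedLT.induction with | _ τ ih =>
  obtain rfl | ⟨ρ, rfl⟩ | hτ := zero_or_succ_or_isSuccLimit τ
  · intro a b ha hb
    rw [opow_zero, Order.lt_one_iff] at ha hb ⊢
    subst a b
    exact nonpos_iff_eq_zero.1 <|
      nadd_le_iff.2 ⟨fun _ h => (not_lt_zero h).elim, fun _ h => (not_lt_zero h).elim⟩
  · intro a b ha hb
    rw [opow_succ] at ha hb ⊢
    obtain ⟨j, r, rfl, hr, -⟩ := exists_eq_mul_natCast_add ha le_rfl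
    obtain ⟨p, s, rfl, hs, -⟩ := exists_eq_mul_natCast_add hb le_rfl
    have hW := ih ρ (Order.lt_succ ρ)
    calc (ω ^ ρ * j + r) ♯ (ω ^ ρ * p + s) ≤ ω ^ ρ * (j + p : ℕ) + (r ♯ s) :=
          mul_add_nadd_mul_add_le hW hr hs
      _ < ω ^ ρ * (j + p + 1 : ℕ) := mul_natCast_add_lt_mul_succ _ (hW hr hs)
      _ < ω ^ ρ * ω := (mul_lt_mul_iff_of_pos_left (opow_pos ρ omega0_pos)).2
          (natCast_lt_omega0 _)
  · intro a b ha hb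
    obtain ⟨σ, hσ, ha⟩ := (lt_opow_of_isSuccLimit omega0_ne_zero hτ).1 ha
    obtain ⟨σ', hσ', hb⟩ := (lt_opow_of_isSuccLimit omega0_ne_zero hτ).1 hb
    have hmax : max σ σ' < τ := max_lt hσ hσ'
    have hle {ν} (h : ν ≤ max σ σ') : ω ^ ν ≤ ω ^ max σ σ' := opow_le_opow_right omega0_pos h
    exact (ih _ hmax (ha.trans_le (hle (le_max_left _ _))) (hb.trans_le (hle (le_max_right _ _))))
      |>.trans_le (opow_le_opow_right omega0_pos hmax.le)

theorem isPrincipal_nadd_of_isPrincipal_add {o : Ordinal.{u}} (ho : IsPrincipal (· + ·) o) :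
    IsPrincipal nadd o := by
  obtain rfl | ⟨τ, rfl⟩ := isPrincipal_add_iff_zero_or_omega0_opow.1 ho
  exacts [isPrincipal_zero, isPrincipal_nadd_omega0_opow τ]

section OrderType

/- `otype` has an independent output universe; we always take it in the universe of its argument,
where `lift (otype A) = typeLT A` for bounded `A`. -/

variable {A B : Set Ordinal.{u}}

theorem lift_otype (hA : BddAbove A) : lift.{u + 1, u} (otype A) = typeLT A := by
  obtain ⟨b, hb⟩ := hA
  have hle : typeLT A ≤ lift.{u + 1} (Order.succ b) := by
    rw [← type_lt_Iio]
    exact (Subrel.inclusionEmbedding (· < ·) fun x hx =>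
      Order.lt_succ_of_le (hb hx)).ordinal_type_le
  obtain ⟨o, ho⟩ := mem_range_lift_of_le hle
  have hiso (o' : Ordinal.{u}) : Nonempty (Iio o' ≃o A) ↔ o' = o := by
    rw [← lift_inj.{u + 1}, ho, ← type_lt_Iio, type_eq]
    exact ⟨fun ⟨e⟩ => ⟨e.toRelIsoLT⟩, fun ⟨e⟩ => ⟨OrderIso.ofRelIsoLT e⟩⟩
  have hset : {o' : Ordinal.{u} | Nonempty (Iio o' ≃o A)} = {o} := Set.ext hiso
  rw [otype, hset, csInf_singleton, ho]

theorem otype_le_otype (hB : BddAbove B) (h : A ⊆ B) : (otype A : Ordinal.{u}) ≤ otype B := by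
  rw [← lift_le.{u + 1, u}, lift_otype (hB.mono h), lift_otype hB]
  exact (Subrel.inclusionEmbedding (· < ·) h).ordinal_type_le

theorem otype_inter_Iio_lt (hA : BddAbove A) {x : Ordinal.{u}} (hx : x ∈ A) :
    (otype (A ∩ Iio x) : Ordinal.{u}) < otype A := by
  rw [← lift_lt.{u + 1, u}, lift_otype (hA.mono inter_subset_left), lift_otype hA]
  let e : ↥(A ∩ Iio x) ≃o Iio (⟨x, hx⟩ : A) :=
    ⟨(Equiv.subtypeSubtypeEquivSubtypeInter (· ∈ A) (· < x)).symm, Iff.rfl⟩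
  rw [e.toRelIsoLT.ordinalType_congr, type_Iio_lt]
  exact typein_lt_type _ _

theorem otype_le_of_strictMonoOn (hA : BddAbove A) {f : Ordinal.{u} → Ordinal.{u}}
    {c : Ordinal.{u}} (hf : StrictMonoOn f A) (hfc : ∀ x ∈ A, f x < c) : otype A ≤ c := by
  rw [← lift_le.{u + 1, u}, lift_otype hA, ← type_lt_Iio]
  exact (OrderEmbedding.ofStrictMono (fun x : A => (⟨f x, hfc x x.2⟩ : Iio c))
    fun x y h => hf x.2 y.2 h).ltEmbedding.ordinal_type_le

theorem otype_inter_Iio_lt_of_lt_sSup (hA : BddAbove A) {x : Ordinal.{u}} (hx : x < sSup A) :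
    (otype (A ∩ Iio x) : Ordinal.{u}) < otype A := by
  obtain ⟨y, hyA, hxy⟩ := exists_lt_of_lt_csSup' hx
  exact (otype_le_otype (hA.mono inter_subset_left)
    (inter_subset_inter_right _ (Iio_subset_Iio hxy.le))).trans_lt (otype_inter_Iio_lt hA hyA)

theorem otype_inter_Iio_lt_otype_inter_Iio (hA : BddAbove A) {x y : Ordinal.{u}} (hx : x ∈ A)
    (hxy : x < y) : (otype (A ∩ Iio x) : Ordinal.{u}) < otype (A ∩ Iio y) := by
  have h := otype_inter_Iio_lt (hA.mono inter_subset_left) (show x ∈ A ∩ Iio y from ⟨hx, hxy⟩)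
  rwa [inter_assoc, Iio_inter_Iio, min_eq_right hxy.le] at h

theorem otype_le_of_forall_otype_inter_Iio_lt (hA : BddAbove A) {c : Ordinal.{u}}
    (h : ∀ x ∈ A, otype (A ∩ Iio x) < c) : otype A ≤ c :=
  otype_le_of_strictMonoOn hA
    (fun _ hx _ _ hxy => otype_inter_Iio_lt_otype_inter_Iio hA hx hxy) h

theorem otype_union_le (hA : BddAbove A) (hB : BddAbove B) :
    (otype (A ∪ B) : Ordinal.{u}) ≤ otype A ♯ otype B := by
  have hmono {C : Set Ordinal.{u}} (hC : BddAbove C) {x y : Ordinal.{u}} (hxy : x ≤ y) :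
      (otype (C ∩ Iio x) : Ordinal.{u}) ≤ otype (C ∩ Iio y) :=
    otype_le_otype (hC.mono inter_subset_left) (inter_subset_inter_right _ (Iio_subset_Iio hxy))
  refine otype_le_of_strictMonoOn (hA.union hB)
    (f := fun z => otype (A ∩ Iio z) ♯ otype (B ∩ Iio z)) ?_ ?_
  · rintro x (hx | hx) y - hxy
    · exact nadd_lt_nadd_of_lt_of_le (otype_inter_Iio_lt_otype_inter_Iio hA hx hxy)
        (hmono hB hxy.le)
    · exact nadd_lt_nadd_of_le_of_lt (hmono hA hxy.le)
        (otype_inter_Iio_lt_otype_inter_Iio hB hx hxy)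
  · rintro z (hz | hz)
    · exact nadd_lt_nadd_of_lt_of_le (otype_inter_Iio_lt hA hz)
        (otype_le_otype hB inter_subset_left)
    · exact nadd_lt_nadd_of_le_of_lt (otype_le_otype hA inter_subset_left)
        (otype_inter_Iio_lt hB hz)

theorem otype_biUnion_lt {C : ℕ → Set Ordinal.{u}} {δ β : Ordinal.{u}}
    (hβ : IsPrincipal nadd β) (hβ0 : 0 < β) (hC : ∀ n, C n ⊆ Iio δ) (K : ℕ)
    (hCβ : ∀ n < K, otype (C n) < β) : otype (⋃ n < K, C n) < β := by
  induction K with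
  | zero =>
    rw [show (⋃ n < 0, C n) = ∅ by simp]
    exact hβ0.trans_le' <| otype_le_of_forall_otype_inter_Iio_lt (c := 0) bddAbove_empty
      fun _ h => (notMem_empty _ h).elim
  | succ K ih =>
    rw [biUnion_lt_succ]
    exact (otype_union_le (bddAbove_Iio.mono (iUnion₂_subset fun n _ => hC n))
      (bddAbove_Iio.mono (hC K))).trans_lt
      (hβ (ih fun n hn => hCβ n (hn.trans K.lt_succ_self)) (hCβ K K.lt_succ_self))

theorem otype_inter_Ici_eq (hA : BddAbove A) (hP : IsPrincipal nadd (otype A : Ordinal.{u}))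
    {S : Set Ordinal.{u}} (hSA : S ⊆ A) (hS : otype S = (otype A : Ordinal.{u}))
    {γ : Ordinal.{u}} (hγ : γ < sSup A) : otype (S ∩ Ici γ) = (otype A : Ordinal.{u}) := by
  have hS' : BddAbove S := hA.mono hSA
  have hlow : (otype (S ∩ Iio γ) : Ordinal.{u}) < otype A :=
    (otype_le_otype (hA.mono inter_subset_left) (inter_subset_inter_left _ hSA)).trans_lt
      (otype_inter_Iio_lt_of_lt_sSup hA hγ)
  refine (otype_le_otype hA (inter_subset_left.trans hSA)).antisymm (not_lt.1 fun hhigh => ?_)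
  have hsplit : (otype S : Ordinal.{u}) ≤ otype (S ∩ Iio γ) ♯ otype (S ∩ Ici γ) := by
    conv_lhs => rw [← inter_univ S, ← Iio_union_Ici (a := γ), inter_union_distrib_left]
    exact otype_union_le (hS'.mono inter_subset_left) (hS'.mono inter_subset_left)
  exact (hS ▸ hsplit).not_gt (hP hlow hhigh)

end OrderType

section Club

variable {δ : Ordinal.{u}}

theorem countable_Iio_of_lt_omega1 (hδ : δ < omega1) : Countable (Iio δ) := by
  rw [← Cardinal.mk_le_aleph0_iff, Cardinal.mk_Iio_ordinal, ← Cardinal.lift_aleph0.{u + 1, u},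
    Cardinal.lift_le]
  exact Cardinal.lt_aleph_one_iff.1 (Cardinal.lt_ord.1 hδ)

theorem exists_monotone_cofinal_seq (hδ : δ < omega1) (hlim : Order.IsSuccLimit δ) :
    ∃ g : ℕ → Ordinal.{u}, Monotone g ∧ (∀ n, g n < δ) ∧ ∀ x < δ, ∃ n, x < g n := by
  have := countable_Iio_of_lt_omega1 hδ
  have : Nonempty (Iio δ) := ⟨⟨0, hlim.bot_lt⟩⟩
  obtain ⟨xs, hmono, htends⟩ := Filter.exists_seq_monotone_tendsto_atTop_atTop (Iio δ)
  refine ⟨fun n => xs n, fun m n h => hmono h, fun n => (xs n).2, fun x hx => ?_⟩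
  obtain ⟨n, hn⟩ := (htends.eventually_ge_atTop ⟨Order.succ x, hlim.succ_lt hx⟩).exists
  exact ⟨n, (Order.lt_succ x).trans_le hn⟩

theorem IsClubIn.isSuccLimit {A : Set Ordinal.{u}} (hA : IsClubIn A δ) (hδ : δ ≠ 0) :
    Order.IsSuccLimit δ := by
  obtain ⟨hAδ, hsup, -⟩ := hA
  refine isSuccLimit_iff.2 ⟨hδ, Order.isSuccPrelimit_iff_succ_lt.2 fun x hx => ?_⟩
  obtain ⟨y, hyA, hxy⟩ := exists_lt_of_lt_csSup' (hsup ▸ hx)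
  exact (Order.succ_le_of_lt hxy).trans_lt (hAδ hyA)

theorem IsClosedIn.union {A B : Set Ordinal.{u}} (hA : IsClosedIn A δ) (hB : IsClosedIn B δ)
    (hA' : BddAbove A) (hB' : BddAbove B) : IsClosedIn (A ∪ B) δ := by
  intro s hs hne hlt
  rcases (s ∩ A).eq_empty_or_nonempty with hsA | hsA
  · exact Or.inr <| hB s (fun x hx => (hs hx).resolve_left fun hxA => hsA.subset ⟨hx, hxA⟩)
      hne hlt
  rcases (s ∩ B).eq_empty_or_nonempty with hsB | hsB
  · exact Or.inl <| hA s (fun x hx => (hs hx).resolve_right fun hxB => hsB.subset ⟨hx, hxB⟩)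
      hne hlt
  have hsup : sSup s = sSup (s ∩ A) ⊔ sSup (s ∩ B) := by
    rw [← csSup_union' (hA'.mono inter_subset_right) (hB'.mono inter_subset_right),
      ← inter_union_distrib_left, inter_eq_left.2 hs]
  rw [hsup] at hlt ⊢
  rcases le_total (sSup (s ∩ A)) (sSup (s ∩ B)) with h | h
  · rw [sup_eq_right.2 h] at hlt ⊢
    exact Or.inr (hB _ inter_subset_right hsB hlt)
  · rw [sup_eq_left.2 h] at hlt ⊢
    exact Or.inl (hA _ inter_subset_right hsA hlt)

theorem IsClosedIn.inter_Ici {A : Set Ordinal.{u}} (hA : IsClosedIn A δ) (hA' : BddAbove A)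
    (γ : Ordinal.{u}) : IsClosedIn (A ∩ Ici γ) δ := fun s hs hne hlt =>
  ⟨hA s (hs.trans inter_subset_left) hne hlt, hne.elim fun _ hx =>
    (hs hx).2.trans (le_csSup (hA'.mono (hs.trans inter_subset_left)) hx)⟩

theorem isClosedIn_biUnion_lt {C : ℕ → Set Ordinal.{u}} (hC : ∀ n, IsClosedIn (C n) δ)
    (hC' : ∀ n, C n ⊆ Iio δ) (K : ℕ) : IsClosedIn (⋃ n < K, C n) δ := by
  induction K with
  | zero => exact fun s hs hne => by simp_all [subset_empty_iff]
  | succ K ih =>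
    rw [biUnion_lt_succ]
    exact ih.union (hC K) (bddAbove_Iio.mono (iUnion₂_subset fun n _ => hC' n))
      (bddAbove_Iio.mono (hC' K))

end Club

section TailUnion

variable {δ : Ordinal.{u}} {A : ℕ → Set Ordinal.{u}} {g : ℕ → Ordinal.{u}}

theorem exists_lt_of_mem_iUnion_inter_Ici (hg : Monotone g) {y : Ordinal.{u}}
    (hy : y ∈ ⋃ n, A n ∩ Ici (g n)) {K : ℕ} (hyK : y < g K) : ∃ n < K, y ∈ A n ∩ Ici (g n) := by
  obtain ⟨n, hn⟩ := mem_iUnion.1 hy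
  exact ⟨n, lt_of_not_ge fun h => (hn.2.trans_lt hyK).not_ge (hg h), hn⟩

theorem isClosedIn_iUnion_inter_Ici (hg : Monotone g) (hcof : ∀ x < δ, ∃ n, x < g n)
    (hA : ∀ n, IsClosedIn (A n) δ) (hAδ : ∀ n, A n ⊆ Iio δ) :
    IsClosedIn (⋃ n, A n ∩ Ici (g n)) δ := by
  intro s hs hne hlt
  obtain ⟨K, hK⟩ := hcof _ hlt
  have hbdd : BddAbove s :=
    bddAbove_Iio.mono (hs.trans (iUnion_subset fun n => inter_subset_left.trans (hAδ n)))
  have hsK : s ⊆ ⋃ n < K, A n ∩ Ici (g n) := fun y hy => by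
    obtain ⟨n, hnK, hn⟩ :=
      exists_lt_of_mem_iUnion_inter_Ici hg (hs hy) ((le_csSup hbdd hy).trans_lt hK)
    exact mem_iUnion₂.2 ⟨n, hnK, hn⟩
  have hclosed := isClosedIn_biUnion_lt
    (fun n => (hA n).inter_Ici (bddAbove_Iio.mono (hAδ n)) (g n))
    (fun n => inter_subset_left.trans (hAδ n)) K
  exact iUnion₂_subset_iUnion _ _ (hclosed s hsK hne hlt)

theorem isClubIn_iUnion_inter_Ici (hg : Monotone g) (hgδ : ∀ n, g n < δ)
    (hcof : ∀ x < δ, ∃ n, x < g n) (hA : ∀ n, IsClubIn (A n) δ) :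
    IsClubIn (⋃ n, A n ∩ Ici (g n)) δ := by
  have hBδ : (⋃ n, A n ∩ Ici (g n)) ⊆ Iio δ :=
    iUnion_subset fun n => inter_subset_left.trans (hA n).1
  refine ⟨hBδ, (csSup_le' fun x hx => (hBδ hx).le).antisymm (le_of_forall_lt fun x hx => ?_),
    isClosedIn_iUnion_inter_Ici hg hcof (fun n => (hA n).2.2) fun n => (hA n).1⟩
  obtain ⟨y, hyA, hy⟩ := exists_lt_of_lt_csSup' ((hA 0).2.1.symm ▸ max_lt hx (hgδ 0))
  exact lt_csSup_of_lt (bddAbove_Iio.mono hBδ)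
    (mem_iUnion.2 ⟨0, hyA, (le_max_right _ _).trans hy.le⟩) ((le_max_left _ _).trans_lt hy)

theorem otype_iUnion_inter_Ici {β : Ordinal.{u}} (hβ : IsPrincipal nadd β) (hβ0 : 0 < β)
    (hg : Monotone g) (hgδ : ∀ n, g n < δ) (hcof : ∀ x < δ, ∃ n, x < g n)
    (hA : ∀ n, IsClubIn (A n) δ ∧ otype (A n) = β) :
    otype (⋃ n, A n ∩ Ici (g n)) = β := by
  set B := ⋃ n, A n ∩ Ici (g n)
  have hAbdd (n : ℕ) : BddAbove (A n) := bddAbove_Iio.mono (hA n).1.1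
  have hBbdd : BddAbove B :=
    bddAbove_Iio.mono (iUnion_subset fun n => inter_subset_left.trans (hA n).1.1)
  refine le_antisymm (otype_le_of_forall_otype_inter_Iio_lt hBbdd fun x hx => ?_) ?_
  · obtain ⟨m, hm⟩ := mem_iUnion.1 hx
    have hxδ : x < δ := (hA m).1.1 hm.1
    obtain ⟨K, hK⟩ := hcof x hxδ
    have hsub : B ∩ Iio x ⊆ ⋃ n < K, A n ∩ Iio x := fun y ⟨hyB, hyx⟩ => by
      obtain ⟨n, hnK, hn⟩ := exists_lt_of_mem_iUnion_inter_Ici hg hyB (hyx.trans hK)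
      exact mem_iUnion₂.2 ⟨n, hnK, hn.1, hyx⟩
    refine (otype_le_otype (bddAbove_Iio.mono (iUnion₂_subset fun n _ => inter_subset_right))
      hsub).trans_lt (otype_biUnion_lt hβ hβ0 (fun n => inter_subset_right) K fun n _ => ?_)
    exact (hA n).2 ▸ otype_inter_Iio_lt_of_lt_sSup (hAbdd n) ((hA n).1.2.1.symm ▸ hxδ)
  · calc β = otype (A 0 ∩ Ici (g 0)) := by
          rw [← (hA 0).2]
          exact (otype_inter_Ici_eq (hAbdd 0) ((hA 0).2 ▸ hβ) subset_rfl rfl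
            ((hA 0).1.2.1.symm ▸ hgδ 0)).symm
      _ ≤ otype B := otype_le_otype hBbdd (subset_iUnion (fun n => A n ∩ Ici (g n)) 0)

end TailUnion

theorem exists_club_otype_eq_inter_Ici_subset {β δ : Ordinal.{u}} (hβ : IsPrincipal nadd β)
    (hβ0 : 0 < β) (hδ : δ < omega1) (hδ0 : δ ≠ 0) {A : ℕ → Set Ordinal.{u}}
    (hA : ∀ n, IsClubIn (A n) δ ∧ otype (A n) = β) :
    ∃ B : Set Ordinal.{u}, (IsClubIn B δ ∧ otype B = β) ∧ ∀ n, ∃ γ < δ, A n ∩ Ici γ ⊆ B := by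
  obtain ⟨g, hg, hgδ, hcof⟩ := exists_monotone_cofinal_seq hδ ((hA 0).1.isSuccLimit hδ0)
  exact ⟨⋃ n, A n ∩ Ici (g n),
    ⟨isClubIn_iUnion_inter_Ici hg hgδ hcof fun n => (hA n).1,
      otype_iUnion_inter_Ici hβ hβ0 hg hgδ hcof hA⟩,
    fun n => ⟨g n, hgδ n, subset_iUnion (fun n => A n ∩ Ici (g n)) n⟩⟩

theorem otype_inter_eq_of_inter_Ici_subset {β δ γ : Ordinal.{u}} (hβ : IsPrincipal nadd β)
    {A B D : Set Ordinal.{u}} (hA : IsClubIn A δ ∧ otype A = β) (hB : IsClubIn B δ ∧ otype B = β)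
    (hγ : γ < δ) (hAB : A ∩ Ici γ ⊆ B) (hAD : otype (A ∩ D) = β) : otype (B ∩ D) = β := by
  have hBbdd : BddAbove B := bddAbove_Iio.mono hB.1.1
  refine le_antisymm (hB.2 ▸ otype_le_otype hBbdd inter_subset_left) ?_
  calc β = otype (A ∩ D ∩ Ici γ) := by
        rw [← hA.2]
        exact (otype_inter_Ici_eq (bddAbove_Iio.mono hA.1.1) (hA.2 ▸ hβ) inter_subset_left
          (hAD.trans hA.2.symm) (hA.1.2.1.symm ▸ hγ)).symm
    _ ≤ otype (B ∩ D) := otype_le_otype (hBbdd.mono inter_subset_left)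
        fun x ⟨⟨hxA, hxD⟩, hxγ⟩ => ⟨hAB ⟨hxA, hxγ⟩, hxD⟩

theorem wcg_iff_wcg_omega_general (β : Ordinal) (hβ : Indecomposable β) : WCG β ↔ WCGomega β := by
  have hP : IsPrincipal nadd β :=
    isPrincipal_nadd_of_isPrincipal_add (isPrincipal_add_iff_add_left_eq_self.2 hβ.2)
  refine ⟨fun ⟨A, hA, hguess⟩ => ⟨fun _ => A, fun _ => hA, fun D hD => ?_⟩,
    fun ⟨A, hA, hguess⟩ => ?_⟩
  · obtain ⟨δ, hδD, hδ0, hβδ, hAD⟩ := hguess D hD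
    exact ⟨δ, hδD, hδ0, hβδ, 0, hAD⟩
  have hB (δ : Ordinal) : ∃ B : Set Ordinal, δ < omega1 → δ ≠ 0 → β ∣ δ →
      (IsClubIn B δ ∧ otype B = β) ∧ ∀ n, ∃ γ < δ, A n δ ∩ Ici γ ⊆ B := by
    by_cases h : δ < omega1 ∧ δ ≠ 0 ∧ β ∣ δ
    · obtain ⟨B, hB⟩ := exists_club_otype_eq_inter_Ici_subset hP hβ.1 h.1 h.2.1
        (hA · δ h.1 h.2.1 h.2.2)
      exact ⟨B, fun _ _ _ => hB⟩
    · exact ⟨∅, fun h₁ h₂ h₃ => (h ⟨h₁, h₂, h₃⟩).elim⟩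
  choose B hB using hB
  refine ⟨B, fun δ h₁ h₂ h₃ => (hB δ h₁ h₂ h₃).1, fun D hD => ?_⟩
  obtain ⟨δ, hδD, hδ0, hβδ, n, hAD⟩ := hguess D hD
  have hδ : δ < omega1 := hD.1 hδD
  obtain ⟨γ, hγ, hAB⟩ := (hB δ hδ hδ0 hβδ).2 n
  exact ⟨δ, hδD, hδ0, hβδ, otype_inter_eq_of_inter_Ici_subset hP (hA n δ hδ hδ0 hβδ)
    (hB δ hδ hδ0 hβδ).1 hγ hAB hAD⟩

/-- For every indecomposable countable ordinal `β`,
`WCG_β` holds iff `WCG^{ℵ₀}_β` holds. -/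
theorem wcg_iff_wcg_omega (β : Ordinal) (hβ : Indecomposable β)
    (hβω : β < omega1) : WCG β ↔ WCGomega β :=
  wcg_iff_wcg_omega_general β hβ
end

section
/- Let (P, ≤) be a quasi-order and let ≤₀ be a quasi-order on P refining ≤ (that is, p ≤₀ q implies p ≤ q) such that every ≤₀-decreasing ω-sequence ⟨p_n : n < ω⟩ in P has a ≤₀-lower bound. Let R be the collection of all countable subsets of P, quasi-ordered by: π₁ ≤_R π₀ if and only if (1) for every p ∈ π₀ there is q ∈ π₁ with q ≤₀ p, and (2) for every q ∈ π₁ the set π₀ is predense below q. Then every ≤_R-decreasing ω-sequence ⟨π_n : n < ω⟩ in R has a ≤_R-lower bound (i.e., R is σ-closed). -/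
/-- Two elements of a quasi-order are compatible if they have a common lower bound. -/
def Compatible {P : Type*} (le : P → P → Prop) (p q : P) : Prop :=
  ∃ t, le t p ∧ le t q

/-- A set `π` is predense below `q` if every `r ≤ q` is compatible with some
element of `π`. -/
def PredenseBelow {P : Type*} (le : P → P → Prop) (π : Set P) (q : P) : Prop :=
  ∀ r, le r q → ∃ p ∈ π, Compatible le r p

/-- The ordering on countable subsets of `P`: `π₁ ≤_R π₀` iff every element of
`π₀` is `≤₀`-extended by an element of `π₁`, and `π₀` is predense below every
element of `π₁`. -/
def LeR {P : Type*} (le le0 : P → P → Prop) (π₁ π₀ : Set P) : Prop :=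
  (∀ p ∈ π₀, ∃ q ∈ π₁, le0 q p) ∧ ∀ q ∈ π₁, PredenseBelow le π₀ q

/-- If `(P, ≤)` is a quasi-order and `≤₀` is a quasi-order refining `≤` such that
every `≤₀`-decreasing `ω`-sequence has a `≤₀`-lower bound, then the quasi-order `R`
of countable subsets of `P`, ordered by `≤_R`, is `σ`-closed: every `≤_R`-decreasing
`ω`-sequence of countable subsets has a countable `≤_R`-lower bound. -/
theorem sigma_closed_of_axiomA {P : Type*} (le le0 : P → P → Prop)
    (hle_refl : ∀ p, le p p)
    (hle_trans : ∀ p q r, le p q → le q r → le p r)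
    (hle0_refl : ∀ p, le0 p p)
    (hle0_trans : ∀ p q r, le0 p q → le0 q r → le0 p r)
    (hrefine : ∀ p q, le0 p q → le p q)
    (hσ : ∀ p : ℕ → P, (∀ n, le0 (p (n + 1)) (p n)) → ∃ q, ∀ n, le0 q (p n)) :
    ∀ π : ℕ → Set P, (∀ n, (π n).Countable) →
      (∀ n, LeR le le0 (π (n + 1)) (π n)) →
      ∃ σ : Set P, σ.Countable ∧ ∀ n, LeR le le0 σ (π n) := by
  intro π hcount hdec
  -- predensity lemma: π n is predense below any element of π (n + d)
  have hpred : ∀ n d, ∀ q ∈ π (n + d), PredenseBelow le (π n) q := by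
    intro n d
    induction d with
    | zero => exact fun q hq r hr => ⟨q, hq, r, hle_refl r, hr⟩
    | succ d ih =>
      intro q hq r hr
      obtain ⟨p, hp, t, htr, htp⟩ := (hdec (n + d)).2 q hq r hr
      obtain ⟨s, hs, u, hut, hus⟩ := ih p hp t htp
      exact ⟨s, hs, u, hle_trans u t r hut htr, hus⟩
  -- choice of ≤₀-extensions
  have h1 : ∀ n (p : ↥(π n)), ∃ q, q ∈ π (n + 1) ∧ le0 q p :=
    fun n p => by
      obtain ⟨q, hq, hq0⟩ := (hdec n).1 p p.2
      exact ⟨q, hq, hq0⟩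
  choose f hf hf0 using h1
  -- fusion chains
  let chain : ∀ m, ↥(π m) → ∀ k, ↥(π (m + k)) := fun m p k =>
    Nat.rec (motive := fun k => ↥(π (m + k))) p (fun k prev => ⟨f (m + k) prev, hf _ _⟩) k
  have hchain0 : ∀ m (p : ↥(π m)), chain m p 0 = p := fun _ _ => rfl
  have hchain_dec : ∀ m (p : ↥(π m)) k,
      le0 ((chain m p (k + 1)) : P) ((chain m p k) : P) :=
    fun m p k => hf0 (m + k) (chain m p k)
  -- ≤₀-lower bounds of the chains
  have hb : ∀ m (p : ↥(π m)), ∃ q, ∀ k, le0 q ((chain m p k) : P) :=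
    fun m p => hσ (fun k => (chain m p k : P)) (hchain_dec m p)
  choose b hbl using hb
  refine ⟨⋃ m, Set.range (b m), ?_, ?_⟩
  · haveI : ∀ m, Countable ↥(π m) := fun m => (hcount m).to_subtype
    exact Set.countable_iUnion fun m => Set.countable_range _
  · intro n
    constructor
    · intro p hp
      refine ⟨b n ⟨p, hp⟩, Set.mem_iUnion.2 ⟨n, Set.mem_range_self _⟩, ?_⟩
      have := hbl n ⟨p, hp⟩ 0
      simpa [hchain0] using this
    · intro q hq r hr
      obtain ⟨m, p, hpm, rfl⟩ : ∃ m p hpm, b m ⟨p, hpm⟩ = q := by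
        obtain ⟨m, p, hpq⟩ := Set.mem_iUnion.1 hq
        exact ⟨m, p.1, p.2, hpq⟩
      -- chain m ⟨p, hpm⟩ n ∈ π (m + n) = π (n + m)
      have hmem : ((chain m ⟨p, hpm⟩ n) : P) ∈ π (n + m) := by
        rw [Nat.add_comm]; exact (chain m ⟨p, hpm⟩ n).2
      have hq' : le (b m ⟨p, hpm⟩) ((chain m ⟨p, hpm⟩ n) : P) := hrefine _ _ (hbl m ⟨p, hpm⟩ n)
      exact hpred n m _ hmem r (hle_trans r (b m ⟨p, hpm⟩) _ hr hq')
end
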